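/- Let G be a compact Hausdorff topological group with identity e, let a ∈ G with a ≠ e and a² = e, and let μ = α₀ δ_e + α₁ δ_a with α₀, α₁ > 0 and α₀ + α₁ = 1. If ν ∈ P(G) satisfies μ ∗ ν ∗ μ = μ, then the topological support of ν is contained in {e, a}; consequently ν = β₀ δ_e + β₁ δ_a for some β₀, β₁ ≥ 0 with β₀ + β₁ = 1. -/

import Mathlib

/-!
The measure `μ` lives on the subgroup `H = {1, a}`, and convolving with it on either side
averages a measure over its translates by the elements of `H`. The complement of `H` is
invariant under these translations, so `ν Hᶜ = (μ ∗ ν) Hᶜ = (μ ∗ ν ∗ μ) Hᶜ = μ Hᶜ = 0`;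
a measure carried by two points is a combination of the two Dirac masses.
-/

open MeasureTheory
open scoped MeasureTheory ENNReal

/-- The topological support of a measure: the set of points all of whose open
neighbourhoods have positive measure. -/
def measSupport {G : Type*} [TopologicalSpace G] [MeasurableSpace G]
    (μ : Measure G) : Set G :=
  {x | ∀ U : Set G, IsOpen U → x ∈ U → 0 < μ U}

namespace MeasureTheory.Measure

section Monoid

variable {M : Type*} [Monoid M] [MeasurableSpace M] [MeasurableMul M]
  [MeasurableSingletonClass M]

/- Mathlib's `mconv_dirac` and `mconv_add` assume `MeasurableMul₂`, which a Borel group need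
not satisfy without second countability; against a Dirac factor multiplication is still a.e.
equal to a measurable map. -/
lemma aemeasurable_mul_prod_dirac (ρ : Measure M) [SFinite ρ] (x : M) :
    AEMeasurable (fun p : M × M ↦ p.1 * p.2) (ρ.prod (dirac x)) := by
  have hsnd : ∀ᵐ p ∂ρ.prod (dirac x), p.2 = x := by
    rw [prod_dirac]
    exact (ae_map_iff measurable_prodMk_right.aemeasurable
      (measurable_snd (measurableSet_singleton x))).2 (ae_of_all _ fun _ ↦ rfl)
  refine (measurable_fst.mul_const x).aemeasurable.congr ?_
  filter_upwards [hsnd] with p hp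
  rw [hp]

lemma aemeasurable_mul_dirac_prod (x : M) (ρ : Measure M) [SFinite ρ] :
    AEMeasurable (fun p : M × M ↦ p.1 * p.2) ((dirac x).prod ρ) := by
  have hfst : ∀ᵐ p ∂(dirac x).prod ρ, p.1 = x := by
    rw [dirac_prod]
    exact (ae_map_iff measurable_prodMk_left.aemeasurable
      (measurable_fst (measurableSet_singleton x))).2 (ae_of_all _ fun _ ↦ rfl)
  refine (measurable_snd.const_mul x).aemeasurable.congr ?_
  filter_upwards [hfst] with p hp
  rw [hp]

lemma mconv_dirac_of_measurableSingletonClass (ρ : Measure M) [SFinite ρ] (x : M) :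
    ρ ∗ₘ dirac x = ρ.map (· * x) := by
  have h := aemeasurable_mul_prod_dirac ρ x
  rw [prod_dirac] at h
  rw [mconv, prod_dirac, AEMeasurable.map_map_of_aemeasurable h
    measurable_prodMk_right.aemeasurable]
  rfl

lemma dirac_mconv_of_measurableSingletonClass (x : M) (ρ : Measure M) [SFinite ρ] :
    dirac x ∗ₘ ρ = ρ.map (x * ·) := by
  have h := aemeasurable_mul_dirac_prod x ρ
  rw [dirac_prod] at h
  rw [mconv, dirac_prod, AEMeasurable.map_map_of_aemeasurable h
    measurable_prodMk_left.aemeasurable]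
  rfl

lemma mconv_smul_dirac_add_smul_dirac (ρ : Measure M) [SFinite ρ] (c d : ℝ≥0∞) (x y : M) :
    ρ ∗ₘ (c • dirac x + d • dirac y) = c • ρ.map (· * x) + d • ρ.map (· * y) := by
  rw [mconv, prod_add, prod_smul_right, prod_smul_right,
    AEMeasurable.map_add₀ ((aemeasurable_mul_prod_dirac ρ x).smul_measure c)
      ((aemeasurable_mul_prod_dirac ρ y).smul_measure d),
    Measure.map_smul, Measure.map_smul, ← mconv, ← mconv,
    mconv_dirac_of_measurableSingletonClass, mconv_dirac_of_measurableSingletonClass]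

lemma smul_dirac_add_smul_dirac_mconv (c d : ℝ≥0∞) (x y : M) (ρ : Measure M) [SFinite ρ] :
    (c • dirac x + d • dirac y) ∗ₘ ρ = c • ρ.map (x * ·) + d • ρ.map (y * ·) := by
  rw [mconv, add_prod, prod_smul_left, prod_smul_left,
    AEMeasurable.map_add₀ ((aemeasurable_mul_dirac_prod x ρ).smul_measure c)
      ((aemeasurable_mul_dirac_prod y ρ).smul_measure d),
    Measure.map_smul, Measure.map_smul, ← mconv, ← mconv,
    dirac_mconv_of_measurableSingletonClass, dirac_mconv_of_measurableSingletonClass]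

lemma mconv_smul_dirac_add_smul_dirac_apply_of_preimage_eq (ρ : Measure M) [SFinite ρ]
    {c d : ℝ≥0∞} (hcd : c + d = 1) {x y : M} {B : Set M} (hB : MeasurableSet B)
    (hx : (· * x) ⁻¹' B = B) (hy : (· * y) ⁻¹' B = B) :
    (ρ ∗ₘ (c • dirac x + d • dirac y)) B = ρ B := by
  rw [mconv_smul_dirac_add_smul_dirac, add_apply, smul_apply, smul_apply,
    map_apply (measurable_mul_const x) hB, map_apply (measurable_mul_const y) hB, hx, hy,
    smul_eq_mul, smul_eq_mul, ← add_mul, hcd, one_mul]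

lemma smul_dirac_add_smul_dirac_mconv_apply_of_preimage_eq (ρ : Measure M) [SFinite ρ]
    {c d : ℝ≥0∞} (hcd : c + d = 1) {x y : M} {B : Set M} (hB : MeasurableSet B)
    (hx : (x * ·) ⁻¹' B = B) (hy : (y * ·) ⁻¹' B = B) :
    ((c • dirac x + d • dirac y) ∗ₘ ρ) B = ρ B := by
  rw [smul_dirac_add_smul_dirac_mconv, add_apply, smul_apply, smul_apply,
    map_apply (measurable_const_mul x) hB, map_apply (measurable_const_mul y) hB, hx, hy,
    smul_eq_mul, smul_eq_mul, ← add_mul, hcd, one_mul]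

end Monoid

lemma eq_smul_dirac_add_smul_dirac_of_measure_compl_eq_zero {α : Type*} [MeasurableSpace α]
    [MeasurableSingletonClass α] {ν : Measure α} {x y : α} (hxy : x ≠ y)
    (hν : ν {x, y}ᶜ = 0) :
    ν = ν {x} • dirac x + ν {y} • dirac y := by
  rw [← restrict_singleton, ← restrict_singleton, ← restrict_union
    (Set.disjoint_singleton.2 hxy) (measurableSet_singleton y), ← Set.insert_eq]
  exact (restrict_eq_self_of_ae_mem (ae_iff.2 hν)).symm

end MeasureTheory.Measure

lemma measSupport_subset_of_measure_compl_eq_zero {α : Type*} [TopologicalSpace α]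
    [MeasurableSpace α] {ν : Measure α} {S : Set α} (hS : IsClosed S) (hν : ν Sᶜ = 0) :
    measSupport ν ⊆ S := fun x hx ↦ by
  by_contra hxS
  exact (hx Sᶜ hS.isOpen_compl hxS).ne' hν

lemma preimage_mul_right_pair_eq {G : Type*} [Group G] {a : G} (ha : a * a = 1) :
    (· * a) ⁻¹' {1, a} = ({1, a} : Set G) := by
  ext x
  simp only [Set.mem_preimage, Set.mem_insert_iff, Set.mem_singleton_iff,
    mul_eq_one_iff_eq_inv, inv_eq_of_mul_eq_one_right ha, mul_eq_right]
  tauto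

lemma preimage_mul_left_pair_eq {G : Type*} [Group G] {a : G} (ha : a * a = 1) :
    (a * ·) ⁻¹' {1, a} = ({1, a} : Set G) := by
  ext x
  simp only [Set.mem_preimage, Set.mem_insert_iff, Set.mem_singleton_iff,
    mul_eq_one_iff_inv_eq, inv_eq_of_mul_eq_one_right ha, eq_comm, left_eq_mul]
  tauto

theorem generalized_inverse_supported_on_pair_general {G : Type*} [Group G] [TopologicalSpace G]
    [IsTopologicalGroup G] [T2Space G] [MeasurableSpace G] [BorelSpace G]
    (a : G) (ha : a ≠ 1) (ha2 : a ^ 2 = 1)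
    (α₀ α₁ : ℝ≥0∞) (hsum : α₀ + α₁ = 1)
    (μ : Measure G)
    (hμ : μ = α₀ • Measure.dirac (1 : G) + α₁ • Measure.dirac a)
    (ν : Measure G) (hν : IsProbabilityMeasure ν)
    (h : (μ ∗ₘ ν) ∗ₘ μ = μ) :
    measSupport ν ⊆ {1, a} ∧
      ∃ β₀ β₁ : ℝ≥0∞, β₀ + β₁ = 1 ∧
        ν = β₀ • Measure.dirac (1 : G) + β₁ • Measure.dirac a := by
  have haa : a * a = 1 := by rwa [← sq]
  have hS : MeasurableSet ({1, a} : Set G)ᶜ := ((measurableSet_singleton a).insert 1).compl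
  have hνS : ν {1, a}ᶜ = 0 := calc
    ν {1, a}ᶜ = (μ ∗ₘ ν) {1, a}ᶜ := by
      rw [hμ, Measure.smul_dirac_add_smul_dirac_mconv_apply_of_preimage_eq ν hsum hS
        (by simp) (by rw [Set.preimage_compl, preimage_mul_left_pair_eq haa])]
    _ = ((μ ∗ₘ ν) ∗ₘ μ) {1, a}ᶜ := by
      rw [hμ, Measure.mconv_smul_dirac_add_smul_dirac_apply_of_preimage_eq _ hsum hS
        (by simp) (by rw [Set.preimage_compl, preimage_mul_right_pair_eq haa])]
    _ = μ {1, a}ᶜ := by rw [h]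
    _ = 0 := by simp [hμ]
  have hν_eq := Measure.eq_smul_dirac_add_smul_dirac_of_measure_compl_eq_zero (Ne.symm ha) hνS
  refine ⟨measSupport_subset_of_measure_compl_eq_zero (Set.toFinite _).isClosed hνS,
    ν {1}, ν {a}, ?_, hν_eq⟩
  simpa using (congrArg (· Set.univ) hν_eq).symm

/-- If `a ≠ e`, `a² = e`, `μ = α₀ δ_e + α₁ δ_a` with `α₀, α₁ > 0`, `α₀ + α₁ = 1`, and
`ν ∈ P(G)` satisfies `μ ∗ ν ∗ μ = μ`, then `supp(ν) ⊆ {e, a}` and consequently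
`ν = β₀ δ_e + β₁ δ_a` with `β₀ + β₁ = 1`. -/
theorem generalized_inverse_supported_on_pair {G : Type*} [Group G] [TopologicalSpace G]
    [IsTopologicalGroup G] [CompactSpace G] [T2Space G] [MeasurableSpace G] [BorelSpace G]
    (a : G) (ha : a ≠ 1) (ha2 : a ^ 2 = 1)
    (α₀ α₁ : ℝ≥0∞) (h0 : 0 < α₀) (h1 : 0 < α₁) (hsum : α₀ + α₁ = 1)
    (μ : Measure G)
    (hμ : μ = α₀ • Measure.dirac (1 : G) + α₁ • Measure.dirac a)
    (ν : Measure G) (hν : IsProbabilityMeasure ν) (hνr : ν.Regular)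
    (h : (μ ∗ₘ ν) ∗ₘ μ = μ) :
    measSupport ν ⊆ {1, a} ∧
      ∃ β₀ β₁ : ℝ≥0∞, β₀ + β₁ = 1 ∧
        ν = β₀ • Measure.dirac (1 : G) + β₁ • Measure.dirac a :=
  generalized_inverse_supported_on_pair_general a ha ha2 α₀ α₁ hsum μ hμ ν hν h
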